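/- arXiv:1808.04747 — 2 statements merged into one kernel-verified Lean document; each statement's English description precedes it below -/
import Mathlib

section
/- Convergence of the QVI solutions as the switching cost vanishes: for each c > 0, let u^c be the solution of the QVI with switching cost c. Then c₁ ≥ c₂ > 0 implies u^{c₁} ≤ u^{c₂} componentwise, and there exists ū ∈ ℝ^N such that for every i ∈ I the component (u^c)^i converges to ū as c → 0⁺ with (u^c)^i ≤ ū for all c > 0, and the vector 𝐮 = (ū,…,ū) ∈ ℝ^{N×d} satisfies the limiting HJB-type problem: min_{i∈I} F_i(𝐮)_l = 0 for all l ∈ {1,…,N}. -/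
open Filter Topology

noncomputable section

/-- A monotone system with constant `γ`: whenever `u i l - v i l` is the (nonnegative)
maximum of all differences, `F u i l - F v i l ≥ γ (u i l - v i l)`. -/
def IsMonotoneSystem {N d : ℕ} (γ : ℝ)
    (F : (Fin d → Fin N → ℝ) → Fin d → Fin N → ℝ) : Prop :=
  ∀ u v : Fin d → Fin N → ℝ, ∀ i : Fin d, ∀ l : Fin N,
    (∀ (j : Fin d) (k : Fin N), u j k - v j k ≤ u i l - v i l) →
    0 ≤ u i l - v i l →
    γ * (u i l - v i l) ≤ F u i l - F v i l

/-- The intervention operator `(M_i u)_l = max_{j ≠ i} (u j l - c)`. -/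
def Mop {N d : ℕ} (c : ℝ) (u : Fin d → Fin N → ℝ) (i : Fin d) (l : Fin N) : ℝ :=
  ⨆ j : {j : Fin d // j ≠ i}, (u j l - c)

/-- The sup-norm `‖u‖ = max_{i,l} |u i l|`. -/
def supNorm {N d : ℕ} (u : Fin d → Fin N → ℝ) : ℝ :=
  ⨆ p : Fin d × Fin N, |u p.1 p.2|

/-- A penalty function: continuous, non-decreasing, vanishing on `(-∞,0]` and
positive on `(0,∞)`. -/
def IsPenaltyFunction (π : ℝ → ℝ) : Prop :=
  Continuous π ∧ Monotone π ∧ (∀ y : ℝ, y ≤ 0 → π y = 0) ∧ (∀ y : ℝ, 0 < y → 0 < π y)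

/-- A concave system: each `F_i` is concave (componentwise). -/
def IsConcaveSystem {N d : ℕ}
    (F : (Fin d → Fin N → ℝ) → Fin d → Fin N → ℝ) : Prop :=
  ∀ (i : Fin d) (u v : Fin d → Fin N → ℝ) (θ : ℝ), 0 ≤ θ → θ ≤ 1 → ∀ l : Fin N,
    θ * F u i l + (1 - θ) * F v i l ≤ F (fun j k => θ * u j k + (1 - θ) * v j k) i l

/-!
Everything rests on the comparison principle: a subsolution `v` of the QVI lies below a
supersolution `u`. At a point where `v - u` is maximal and positive, monotonicity of `F` rules
out `F v ≤ 0`, so `v` must switch to some `j`; but the switch keeps `v - u` maximal while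
raising `v` by `c`, which is impossible if `v` was chosen maximal among the maximisers of `v - u`.

A solution with cost `c₂` is a supersolution for every larger cost, so `u^c` is antitone in `c`;
it is bounded above by a constant supersolution, hence converges as `c → 0⁺`. The supersolution
inequality `u^c_i ≤ u^c_j + c` forces all components to a common limit `ū`. Finally
`min_i F_i(u^c) = 0`, because the component where `u^c` is largest cannot switch, and this
passes to the limit by continuity of `F`.
-/

section Limits

lemma AntitoneOn.le_of_tendsto_nhdsGT {α β : Type*} [LinearOrder α] [TopologicalSpace α]
    [OrderTopology α] [DenselyOrdered α] [NoMaxOrder α] [Preorder β] [TopologicalSpace β]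
    [ClosedIciTopology β] {f : α → β} {x a : α} {b : β} (hf : AntitoneOn f (Set.Ioi x))
    (hlim : Tendsto f (𝓝[>] x) (𝓝 b)) (ha : x < a) : f a ≤ b :=
  ge_of_tendsto hlim <| Filter.mem_of_superset (Ioo_mem_nhdsGT ha) fun _ hy =>
    hf hy.1 ha hy.2.le

lemma tendsto_nhdsGT_zero_of_abs_sub_le {f g : ℝ → ℝ} {b : ℝ}
    (hfg : ∀ c, 0 < c → |f c - g c| ≤ c) (hg : Tendsto g (𝓝[>] 0) (𝓝 b)) :
    Tendsto f (𝓝[>] 0) (𝓝 b) := by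
  have hsub : Tendsto (fun c => f c - g c) (𝓝[>] 0) (𝓝 0) :=
    squeeze_zero_norm' (eventually_nhdsWithin_of_forall hfg)
      (tendsto_nhdsWithin_of_tendsto_nhds tendsto_id)
  simpa using hsub.add hg

lemma continuous_iInf_apply {ι α β : Type*} [Fintype ι] [Nonempty ι] [TopologicalSpace α]
    [ConditionallyCompleteLinearOrder β] [TopologicalSpace β] [OrderClosedTopology β]
    {f : ι → α → β} (hf : ∀ i, Continuous (f i)) : Continuous fun a => ⨅ i, f i a := by
  simp only [← Finset.inf'_univ_eq_ciInf]
  exact Continuous.finset_inf'_apply Finset.univ_nonempty fun i _ => hf i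

end Limits

section QVI

variable {N d : ℕ} {F : (Fin d → Fin N → ℝ) → Fin d → Fin N → ℝ} {c : ℝ}
  {u v : Fin d → Fin N → ℝ}

lemma nonempty_ne_of_two_le (hd : 2 ≤ d) (i : Fin d) : Nonempty {j : Fin d // j ≠ i} :=
  let ⟨j, hj⟩ := Fintype.exists_ne_of_one_lt_card (by simp only [Fintype.card_fin]; omega) i
  ⟨⟨j, hj⟩⟩

lemma le_Mop {i j : Fin d} (hj : j ≠ i) (l : Fin N) : u j l - c ≤ Mop c u i l :=
  le_ciSup (f := fun j : {j : Fin d // j ≠ i} => u j l - c) (Finite.bddAbove_range _) ⟨j, hj⟩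

lemma Mop_le_iff (hd : 2 ≤ d) {i : Fin d} {l : Fin N} {x : ℝ} :
    Mop c u i l ≤ x ↔ ∀ j, j ≠ i → u j l - c ≤ x :=
  have := nonempty_ne_of_two_le hd i
  ⟨fun h _ hj => (le_Mop hj l).trans h, fun h => ciSup_le fun j => h j.1 j.2⟩

lemma exists_le_sub_of_le_Mop (hd : 2 ≤ d) {i : Fin d} {l : Fin N} {x : ℝ}
    (h : x ≤ Mop c u i l) : ∃ j, j ≠ i ∧ x ≤ u j l - c := by
  have := nonempty_ne_of_two_le hd i
  obtain ⟨j, hj⟩ := exists_eq_ciSup_of_finite (f := fun j : {j : Fin d // j ≠ i} => u j l - c)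
  exact ⟨j.1, j.2, h.trans_eq hj.symm⟩

lemma Mop_anti_cost {c₁ c₂ : ℝ} (h : c₂ ≤ c₁) (i : Fin d) (l : Fin N) :
    Mop c₁ u i l ≤ Mop c₂ u i l :=
  ciSup_mono (Finite.bddAbove_range _) fun _ => sub_le_sub_left h _

variable (F c)

def IsQVISolution (u : Fin d → Fin N → ℝ) : Prop :=
  ∀ i l, min (F u i l) (u i l - Mop c u i l) = 0

def IsQVISupersolution (u : Fin d → Fin N → ℝ) : Prop :=
  ∀ i l, 0 ≤ F u i l ∧ Mop c u i l ≤ u i l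

def IsQVISubsolution (v : Fin d → Fin N → ℝ) : Prop :=
  ∀ i l, F v i l ≤ 0 ∨ v i l ≤ Mop c v i l

variable {F c}

lemma IsQVISolution.isQVISupersolution (hu : IsQVISolution F c u) : IsQVISupersolution F c u :=
  fun i l => ⟨(hu i l).symm.le.trans (min_le_left _ _),
    sub_nonneg.1 <| (hu i l).symm.le.trans (min_le_right _ _)⟩

lemma IsQVISolution.isQVISubsolution (hu : IsQVISolution F c u) : IsQVISubsolution F c u :=
  fun i l => (min_eq_iff.1 (hu i l)).imp (fun h => h.1.le) fun h => sub_nonpos.1 h.1.le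

lemma IsQVISupersolution.of_cost_le {c₁ c₂ : ℝ} (hu : IsQVISupersolution F c₂ u) (h : c₂ ≤ c₁) :
    IsQVISupersolution F c₁ u :=
  fun i l => ⟨(hu i l).1, (Mop_anti_cost h i l).trans (hu i l).2⟩

lemma IsQVISupersolution.abs_sub_le (hu : IsQVISupersolution F c u) (hc : 0 ≤ c)
    (i j : Fin d) (l : Fin N) : |u i l - u j l| ≤ c := by
  have key : ∀ i j, u i l ≤ u j l + c := fun i j => by
    rcases eq_or_ne i j with rfl | hij
    · linarith
    · linarith [(le_Mop hij l).trans (hu j l).2]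
  exact abs_sub_le_iff.2 ⟨by linarith [key i j], by linarith [key j i]⟩

theorem IsQVISubsolution.le_of_isQVISupersolution (hd : 2 ≤ d) {γ : ℝ} (hγ : 0 < γ)
    (hF : IsMonotoneSystem γ F) (hc : 0 < c) (hv : IsQVISubsolution F c v)
    (hu : IsQVISupersolution F c u) (i : Fin d) (l : Fin N) : v i l ≤ u i l := by
  by_contra! hlt
  let D : Fin d × Fin N → ℝ := fun p => v p.1 p.2 - u p.1 p.2
  obtain ⟨p, -, hp⟩ := Finset.exists_max_image Finset.univ D ⟨(i, l), Finset.mem_univ _⟩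
  have hpos : 0 < D p := by linarith [(hp (i, l) (Finset.mem_univ _) : v i l - u i l ≤ D p)]
  obtain ⟨⟨i, l⟩, hq, hq_max⟩ := Finset.exists_max_image
    (Finset.univ.filter fun q => D q = D p) (fun q => v q.1 q.2) ⟨p, by simp⟩
  have hDq : v i l - u i l = D p := (Finset.mem_filter.1 hq).2
  rcases hv i l with hFv | hswitch
  · have hmono := hF v u i l (fun j k => hDq ▸ hp (j, k) (Finset.mem_univ _)) (by linarith)
    nlinarith [(hu i l).1]
  · obtain ⟨j, hji, hj⟩ := exists_le_sub_of_le_Mop hd hswitch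
    have hu_ij : u j l - c ≤ u i l := (le_Mop hji l).trans (hu i l).2
    have hDj : D (j, l) = D p := le_antisymm (hp _ (Finset.mem_univ _)) (by dsimp [D]; linarith)
    linarith [hq_max (j, l) (by simp [hDj])]

lemma IsMonotoneSystem.exists_const_isQVISupersolution (hd : 2 ≤ d) {γ : ℝ} (hγ : 0 < γ)
    (hF : IsMonotoneSystem γ F) : ∃ K : ℝ, ∀ c, 0 ≤ c → IsQVISupersolution F c fun _ _ => K := by
  obtain ⟨B, hB⟩ := (Set.finite_range fun p : Fin d × Fin N => -F 0 p.1 p.2).bddAbove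
  refine ⟨max B 0 / γ, fun c hc i l => ⟨?_, (Mop_le_iff hd).2 fun _ _ => by linarith⟩⟩
  have hK : γ * (max B 0 / γ) = max B 0 := mul_div_cancel₀ _ hγ.ne'
  have hmono := hF (fun _ _ => max B 0 / γ) 0 i l (fun _ _ => le_rfl)
    (by simp only [Pi.zero_apply, sub_zero]; positivity)
  simp only [Pi.zero_apply, sub_zero, hK] at hmono
  linarith [le_max_left B 0, hB ⟨(i, l), rfl⟩]

lemma IsQVISolution.iInf_eq_zero (hd : 2 ≤ d) (hc : 0 < c) (hu : IsQVISolution F c u)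
    (l : Fin N) : ⨅ i, F u i l = 0 := by
  have : Nonempty (Fin d) := ⟨⟨0, by omega⟩⟩
  obtain ⟨i, hi⟩ := Finite.exists_max fun i => u i l
  have hMop : Mop c u i l < u i l :=
    ((Mop_le_iff hd (x := u i l - c)).2 fun j _ => by linarith [hi j]).trans_lt (by linarith)
  have hFi : F u i l = 0 := by
    rcases min_eq_iff.1 (hu i l) with h | h
    · exact h.1
    · linarith [h.1]
  exact le_antisymm ((ciInf_le (Finite.bddBelow_range _) i).trans_eq hFi)
    (le_ciInf fun j => (hu.isQVISupersolution j l).1)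

theorem IsQVISolution.le_of_cost_le (hd : 2 ≤ d) {γ : ℝ} (hγ : 0 < γ)
    (hF : IsMonotoneSystem γ F) {c₁ c₂ : ℝ} (hc₂ : 0 < c₂) (h : c₂ ≤ c₁)
    (hu : IsQVISolution F c₁ u) (hv : IsQVISolution F c₂ v) (i : Fin d) (l : Fin N) :
    u i l ≤ v i l :=
  hu.isQVISubsolution.le_of_isQVISupersolution hd hγ hF (hc₂.trans_le h)
    (hv.isQVISupersolution.of_cost_le h) i l

lemma iInf_eq_zero_of_tendsto_isQVISolution (hd : 2 ≤ d) (hF : Continuous F)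
    {U : ℝ → Fin d → Fin N → ℝ} (hU : ∀ c, 0 < c → IsQVISolution F c (U c))
    (hlim : Tendsto U (𝓝[>] 0) (𝓝 u)) (l : Fin N) : ⨅ i, F u i l = 0 := by
  have : Nonempty (Fin d) := ⟨⟨0, by omega⟩⟩
  have hcont : Continuous fun w => ⨅ i, F w i l :=
    continuous_iInf_apply fun i => (continuous_apply l).comp ((continuous_apply i).comp hF)
  have hzero : Tendsto (fun c => ⨅ i, F (U c) i l) (𝓝[>] 0) (𝓝 0) :=
    tendsto_const_nhds.congr' (eventually_nhdsWithin_of_forall fun c hc =>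
      ((hU c hc).iInf_eq_zero hd hc l).symm)
  exact tendsto_nhds_unique ((hcont.tendsto u).comp hlim) hzero

end QVI

theorem qvi_vanishing_cost_convergence_general {N d : ℕ} (hd : 2 ≤ d)
    (γ : ℝ) (hγ : 0 < γ)
    (F : (Fin d → Fin N → ℝ) → Fin d → Fin N → ℝ)
    (hFcont : Continuous F) (hFmono : IsMonotoneSystem γ F)
    (U : ℝ → Fin d → Fin N → ℝ)
    (hU : ∀ c : ℝ, 0 < c → ∀ i l, min (F (U c) i l) (U c i l - Mop c (U c) i l) = 0) :
    (∀ c₁ c₂ : ℝ, 0 < c₂ → c₂ ≤ c₁ → ∀ i l, U c₁ i l ≤ U c₂ i l) ∧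
    ∃ ubar : Fin N → ℝ,
      (∀ c : ℝ, 0 < c → ∀ i l, U c i l ≤ ubar l) ∧
      (∀ i l, Filter.Tendsto (fun c => U c i l) (nhdsWithin 0 (Set.Ioi 0)) (nhds (ubar l))) ∧
      (∀ l, (⨅ i : Fin d, F (fun _ => ubar) i l) = 0) := by
  have hsol : ∀ c, 0 < c → IsQVISolution F c (U c) := hU
  have hanti : ∀ c₁ c₂ : ℝ, 0 < c₂ → c₂ ≤ c₁ → ∀ i l, U c₁ i l ≤ U c₂ i l :=
    fun c₁ c₂ hc₂ h => (hsol c₁ (hc₂.trans_le h)).le_of_cost_le hd hγ hFmono hc₂ h (hsol c₂ hc₂)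
  have hantiOn : ∀ i l, AntitoneOn (fun c => U c i l) (Set.Ioi 0) :=
    fun i l c₂ hc₂ _ _ h => hanti _ c₂ hc₂ h i l
  obtain ⟨K, hK⟩ := hFmono.exists_const_isQVISupersolution hd hγ
  have hbdd : ∀ c, 0 < c → ∀ i l, U c i l ≤ K := fun c hc =>
    (hsol c hc).isQVISubsolution.le_of_isQVISupersolution hd hγ hFmono hc (hK c hc.le)
  let i₀ : Fin d := ⟨0, by omega⟩
  let ubar : Fin N → ℝ := fun l => sSup ((fun c => U c i₀ l) '' Set.Ioi 0)
  have hlim₀ : ∀ l, Tendsto (fun c => U c i₀ l) (𝓝[>] 0) (𝓝 (ubar l)) := fun l =>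
    (hantiOn i₀ l).tendsto_nhdsGT ⟨K, Set.forall_mem_image.2 fun c hc => hbdd c hc i₀ l⟩
  have hlim : ∀ i l, Tendsto (fun c => U c i l) (𝓝[>] 0) (𝓝 (ubar l)) := fun i l =>
    tendsto_nhdsGT_zero_of_abs_sub_le
      (fun c hc => (hsol c hc).isQVISupersolution.abs_sub_le hc.le i i₀ l) (hlim₀ l)
  refine ⟨hanti, ubar, fun c hc i l => (hantiOn i l).le_of_tendsto_nhdsGT (hlim i l) hc, hlim,
    iInf_eq_zero_of_tendsto_isQVISolution hd hFcont hsol ?_⟩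
  exact tendsto_pi_nhds.2 fun i => tendsto_pi_nhds.2 (hlim i)

/-- Convergence of the QVI solutions as the switching cost vanishes: monotonicity in `c`,
and convergence to a solution of the limiting HJB-type problem. -/
theorem qvi_vanishing_cost_convergence {N d : ℕ} (hN : 1 ≤ N) (hd : 2 ≤ d)
    (γ : ℝ) (hγ : 0 < γ)
    (F : (Fin d → Fin N → ℝ) → Fin d → Fin N → ℝ)
    (hFcont : Continuous F) (hFmono : IsMonotoneSystem γ F)
    (U : ℝ → Fin d → Fin N → ℝ)
    (hU : ∀ c : ℝ, 0 < c → ∀ i l, min (F (U c) i l) (U c i l - Mop c (U c) i l) = 0) :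
    (∀ c₁ c₂ : ℝ, 0 < c₂ → c₂ ≤ c₁ → ∀ i l, U c₁ i l ≤ U c₂ i l) ∧
    ∃ ubar : Fin N → ℝ,
      (∀ c : ℝ, 0 < c → ∀ i l, U c i l ≤ ubar l) ∧
      (∀ i l, Filter.Tendsto (fun c => U c i l) (nhdsWithin 0 (Set.Ioi 0)) (nhds (ubar l))) ∧
      (∀ l, (⨅ i : Fin d, F (fun _ => ubar) i l) = 0) :=
  qvi_vanishing_cost_convergence_general hd γ hγ F hFcont hFmono U hU
end
end

section
/- Penalty error for zero switching cost: for each ρ ≥ 0 let u^ρ be the solution of the penalized equation with penalty parameter ρ and switching cost c = 0. Then (u^ρ) is componentwise nondecreasing in ρ and converges componentwise as ρ → ∞ to the vector 𝐮 = (ū,…,ū), where ū ∈ ℝ^N solves the limiting HJB-type problem min_{i∈I} F_i(𝐮)_l = 0 for all l ∈ {1,…,N}. If moreover F is locally Lipschitz continuous and there exist constants τ > 0 and σ > 0 such that π(y) ≥ τ·y^{1/σ} for all 0 ≤ y ≤ 2‖F(0)‖/γ, then there exists a constant C₁ > 0, independent of ρ, such that 0 ≤ 𝐮 − u^ρ ≤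 C₁/ρ^σ componentwise for all ρ > 0. -/
open Filter Topology

noncomputable section

/-!
Along the penalized solutions `u^ρ`, the maximum principle of the monotone system gives
`u^ρ` increasing in `ρ` and bounded by `‖F 0‖ / γ`, so it converges to some `L`. Since
`F(u^ρ)` stays bounded, each penalty term satisfies `ρ π(u^ρ_j - u^ρ_i) = O(1)`, which forces
`L` to have equal components, and `min_i F(u^ρ)_l = 0` (attained at the largest component)
passes to the limit. For the rate, the penalty lower bound turns `ρ π(·) = O(1)` into
`u^ρ_j - u^ρ_i = O(ρ^{-σ})`; the componentwise maximum `W` of `u^ρ` is then `O(ρ^{-σ})`-close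
to `u^ρ`, so `F W ≥ -O(ρ^{-σ})` by the Lipschitz bound, and comparing `W` with the limit at a
maximum of the difference bounds `ū - W`.
-/

open Metric

theorem abs_apply_apply_le_norm {ι κ : Type*} [Fintype ι] [Fintype κ] (u : ι → κ → ℝ)
    (i : ι) (l : κ) : |u i l| ≤ ‖u‖ :=
  (norm_le_pi_norm (u i) l).trans (norm_le_pi_norm u i)

theorem norm_le_of_forall_abs_apply_apply_le {ι κ : Type*} [Fintype ι] [Fintype κ]
    {u : ι → κ → ℝ} {R : ℝ} (hR : 0 ≤ R) (h : ∀ i l, |u i l| ≤ R) : ‖u‖ ≤ R :=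
  (pi_norm_le_iff_of_nonneg hR).2 fun i => (pi_norm_le_iff_of_nonneg hR).2 (h i)

theorem supNorm_eq_norm {N d : ℕ} (u : Fin d → Fin N → ℝ) : supNorm u = ‖u‖ :=
  le_antisymm (Real.iSup_le (fun p => abs_apply_apply_le_norm u p.1 p.2) (norm_nonneg u))
    (norm_le_of_forall_abs_apply_apply_le (Real.iSup_nonneg fun _ => abs_nonneg _) fun i l =>
      le_ciSup (f := fun p : Fin d × Fin N => |u p.1 p.2|) (Finite.bddAbove_range _) (i, l))

theorem continuous_ciInf_of_fintype {ι X : Type*} [Fintype ι] [Nonempty ι] [TopologicalSpace X]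
    {f : ι → X → ℝ} (hf : ∀ i, Continuous (f i)) : Continuous fun x => ⨅ i, f i x := by
  simp_rw [← Finset.inf'_univ_eq_ciInf]
  exact Continuous.finset_inf'_apply _ fun i _ => hf i

theorem exists_tendsto_atTop_of_monotoneOn_Ici {α : Type*} [ConditionallyCompleteLattice α]
    [TopologicalSpace α] [SupConvergenceClass α] {f : ℝ → α} {a : ℝ}
    (hf : MonotoneOn f (Set.Ici a)) (hb : BddAbove (f '' Set.Ici a)) :
    ∃ L, Tendsto f atTop (𝓝 L) ∧ ∀ x, a ≤ x → f x ≤ L := by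
  set g : ℝ → α := fun x => f (max x a)
  have hg : Monotone g := fun x y hxy =>
    hf (le_max_right x a) (le_max_right y a) (max_le_max hxy le_rfl)
  have hgb : BddAbove (Set.range g) :=
    hb.mono (Set.range_subset_iff.2 fun x => Set.mem_image_of_mem f (le_max_right x a))
  have hgf : ∀ x, a ≤ x → g x = f x := fun x hx => by simp only [g, max_eq_left hx]
  refine ⟨⨆ x, g x, ?_, fun x hx => hgf x hx ▸ le_ciSup hgb x⟩
  exact (tendsto_atTop_ciSup hg hgb).congr' ((eventually_ge_atTop a).mono hgf)

theorem le_rpow_of_mul_rpow_inv_le {ρ τ σ y K : ℝ} (hρ : 0 < ρ) (hτ : 0 < τ) (hσ : 0 < σ)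
    (hy : 0 ≤ y) (h : ρ * (τ * y ^ (1 / σ)) ≤ K) : y ≤ (K / (τ * ρ)) ^ σ := by
  have hroot : y ^ (1 / σ) ≤ K / (τ * ρ) := by
    rw [le_div_iff₀ (mul_pos hτ hρ)]
    linarith
  calc y = (y ^ (1 / σ)) ^ σ := by
        rw [← Real.rpow_mul hy, one_div, inv_mul_cancel₀ hσ.ne', Real.rpow_one]
    _ ≤ (K / (τ * ρ)) ^ σ := Real.rpow_le_rpow (Real.rpow_nonneg hy _) hroot hσ.le

namespace IsPenaltyFunction

variable {π : ℝ → ℝ}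

protected theorem monotone (hπ : IsPenaltyFunction π) : Monotone π := hπ.2.1

theorem eq_zero_of_nonpos (hπ : IsPenaltyFunction π) {y : ℝ} (hy : y ≤ 0) : π y = 0 :=
  hπ.2.2.1 y hy

theorem pos (hπ : IsPenaltyFunction π) {y : ℝ} (hy : 0 < y) : 0 < π y := hπ.2.2.2 y hy

theorem nonneg (hπ : IsPenaltyFunction π) (y : ℝ) : 0 ≤ π y := by
  rcases le_or_gt y 0 with hy | hy
  · exact (hπ.eq_zero_of_nonpos hy).ge
  · exact (hπ.pos hy).le

theorem nonpos_of_tendsto_of_mul_le (hπ : IsPenaltyFunction π) {x : ℝ → ℝ} {a K : ℝ}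
    (hx : Tendsto x atTop (𝓝 a)) (hK : ∀ᶠ ρ in atTop, ρ * π (x ρ) ≤ K) : a ≤ 0 := by
  by_contra! ha
  have hpos : 0 < π (a / 2) := hπ.pos (by linarith)
  have hxa : ∀ᶠ ρ in atTop, a / 2 < x ρ := hx.eventually (lt_mem_nhds (by linarith))
  have hbig : ∀ᶠ ρ in atTop, K < ρ * π (a / 2) :=
    (tendsto_id.atTop_mul_const hpos).eventually_gt_atTop K
  obtain ⟨ρ, hρK, hρx, hρbig, hρ⟩ :=
    (hK.and (hxa.and (hbig.and (eventually_ge_atTop 0)))).exists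
  have := mul_le_mul_of_nonneg_left (hπ.monotone hρx.le) hρ
  linarith

end IsPenaltyFunction

namespace IsMonotoneSystem

variable {N d : ℕ} {γ : ℝ} {F : (Fin d → Fin N → ℝ) → Fin d → Fin N → ℝ}

theorem sub_le_div_of_isMax (hF : IsMonotoneSystem γ F) (hγ : 0 < γ)
    {u v : Fin d → Fin N → ℝ} {i : Fin d} {l : Fin N} {M : ℝ} (hM : 0 ≤ M)
    (hmax : ∀ j k, u j k - v j k ≤ u i l - v i l)
    (hFM : 0 < u i l - v i l → F u i l - F v i l ≤ M) : u i l - v i l ≤ M / γ := by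
  rcases le_or_gt (u i l - v i l) 0 with hle | hpos
  · exact hle.trans (div_nonneg hM hγ.le)
  · rw [le_div_iff₀ hγ]
    linarith [hF u v i l hmax hpos.le, hFM hpos]

theorem sub_le_div (hF : IsMonotoneSystem γ F) (hγ : 0 < γ) {u v : Fin d → Fin N → ℝ}
    {M : ℝ} (hM : 0 ≤ M)
    (h : ∀ i l, (∀ j k, u j k - v j k ≤ u i l - v i l) → 0 < u i l - v i l →
      F u i l - F v i l ≤ M)
    (i : Fin d) (l : Fin N) : u i l - v i l ≤ M / γ := by
  have : Nonempty (Fin d × Fin N) := ⟨(i, l)⟩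
  obtain ⟨p, hp⟩ := Finite.exists_max fun p : Fin d × Fin N => u p.1 p.2 - v p.1 p.2
  have hmax : ∀ j k, u j k - v j k ≤ u p.1 p.2 - v p.1 p.2 := fun j k => hp (j, k)
  exact (hp (i, l)).trans (hF.sub_le_div_of_isMax hγ hM hmax (h p.1 p.2 hmax))

end IsMonotoneSystem

def IsPenalizedSolution {N d : ℕ} (F : (Fin d → Fin N → ℝ) → Fin d → Fin N → ℝ)
    (π : ℝ → ℝ) (c ρ : ℝ) (u : Fin d → Fin N → ℝ) : Prop :=
  ∀ i l, F u i l - ρ * ∑ j ∈ Finset.univ.erase i, π (u j l - c - u i l) = 0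

namespace IsPenalizedSolution

variable {N d : ℕ} {γ c ρ : ℝ} {F : (Fin d → Fin N → ℝ) → Fin d → Fin N → ℝ} {π : ℝ → ℝ}
  {u : Fin d → Fin N → ℝ}

theorem apply_eq (hu : IsPenalizedSolution F π c ρ u) (i : Fin d) (l : Fin N) :
    F u i l = ρ * ∑ j ∈ Finset.univ.erase i, π (u j l - c - u i l) :=
  sub_eq_zero.1 (hu i l)

theorem mul_penalty_le_apply (hu : IsPenalizedSolution F π c ρ u) (hπ : IsPenaltyFunction π)
    (hρ : 0 ≤ ρ) {i j : Fin d} (hji : j ≠ i) (l : Fin N) :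
    ρ * π (u j l - c - u i l) ≤ F u i l := by
  rw [hu.apply_eq]
  exact mul_le_mul_of_nonneg_left (Finset.single_le_sum (f := fun k => π (u k l - c - u i l))
    (fun k _ => hπ.nonneg _) (Finset.mem_erase.2 ⟨hji, Finset.mem_univ j⟩)) hρ

theorem apply_nonneg (hu : IsPenalizedSolution F π c ρ u) (hπ : IsPenaltyFunction π)
    (hρ : 0 ≤ ρ) (i : Fin d) (l : Fin N) : 0 ≤ F u i l := by
  rw [hu.apply_eq]
  exact mul_nonneg hρ (Finset.sum_nonneg fun j _ => hπ.nonneg _)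

theorem apply_eq_zero_of_isMax (hu : IsPenalizedSolution F π c ρ u) (hπ : IsPenaltyFunction π)
    (hc : 0 ≤ c) {i : Fin d} {l : Fin N} (hmax : ∀ j, u j l ≤ u i l) : F u i l = 0 := by
  rw [hu.apply_eq, Finset.sum_eq_zero fun j _ => hπ.eq_zero_of_nonpos (by linarith [hmax j]),
    mul_zero]

theorem iInf_apply_eq_zero [Nonempty (Fin d)] (hu : IsPenalizedSolution F π c ρ u)
    (hπ : IsPenaltyFunction π) (hρ : 0 ≤ ρ) (hc : 0 ≤ c) (l : Fin N) :
    ⨅ i, F u i l = 0 := by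
  obtain ⟨i, hi⟩ := Finite.exists_max fun i => u i l
  exact le_antisymm ((ciInf_le (Finite.bddBelow_range _) i).trans
      (hu.apply_eq_zero_of_isMax hπ hc hi).le)
    (le_ciInf fun j => hu.apply_nonneg hπ hρ j l)

theorem le_of_penalty_le (hF : IsMonotoneSystem γ F) (hγ : 0 < γ) (hπ : IsPenaltyFunction π)
    {ρ₁ ρ₂ : ℝ} {u₁ u₂ : Fin d → Fin N → ℝ} (hu₁ : IsPenalizedSolution F π c ρ₁ u₁)
    (hu₂ : IsPenalizedSolution F π c ρ₂ u₂) (hρ₁ : 0 ≤ ρ₁) (hρ : ρ₁ ≤ ρ₂) : u₁ ≤ u₂ := by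
  have key : ∀ i l, u₁ i l - u₂ i l ≤ 0 / γ := by
    refine hF.sub_le_div hγ le_rfl fun i l hmax _ => ?_
    have hsum : ∑ j ∈ Finset.univ.erase i, π (u₁ j l - c - u₁ i l)
        ≤ ∑ j ∈ Finset.univ.erase i, π (u₂ j l - c - u₂ i l) :=
      Finset.sum_le_sum fun j _ => hπ.monotone (by linarith [hmax j l])
    have hS : 0 ≤ ∑ j ∈ Finset.univ.erase i, π (u₁ j l - c - u₁ i l) :=
      Finset.sum_nonneg fun j _ => hπ.nonneg _
    rw [hu₁.apply_eq, hu₂.apply_eq, sub_nonpos]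
    exact (mul_le_mul_of_nonneg_right hρ hS).trans
      (mul_le_mul_of_nonneg_left hsum (hρ₁.trans hρ))
  exact fun i l => sub_nonpos.1 ((key i l).trans_eq (zero_div γ))

theorem norm_le (hu : IsPenalizedSolution F π c ρ u) (hF : IsMonotoneSystem γ F) (hγ : 0 < γ)
    (hπ : IsPenaltyFunction π) (hρ : 0 ≤ ρ) (hc : 0 ≤ c) : ‖u‖ ≤ ‖F 0‖ / γ := by
  have hupper : ∀ i l, u i l - (0 : Fin d → Fin N → ℝ) i l ≤ ‖F 0‖ / γ :=
    hF.sub_le_div hγ (norm_nonneg _) fun i l hmax _ => by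
      have hmax' : ∀ j, u j l ≤ u i l := fun j => by simpa using hmax j l
      rw [hu.apply_eq_zero_of_isMax hπ hc hmax', zero_sub]
      exact (neg_le_abs _).trans (abs_apply_apply_le_norm (F 0) i l)
  have hlower : ∀ i l, (0 : Fin d → Fin N → ℝ) i l - u i l ≤ ‖F 0‖ / γ :=
    hF.sub_le_div hγ (norm_nonneg _) fun i l _ _ => by
      linarith [hu.apply_nonneg hπ hρ i l, le_abs_self (F 0 i l),
        abs_apply_apply_le_norm (F 0) i l]
  refine norm_le_of_forall_abs_apply_apply_le (div_nonneg (norm_nonneg _) hγ.le) fun i l => ?_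
  have h1 := hupper i l
  have h2 := hlower i l
  simp only [Pi.zero_apply] at h1 h2
  exact abs_le.2 ⟨by linarith, by linarith⟩

end IsPenalizedSolution

section PenalizedFamily

variable {N d : ℕ} {γ : ℝ} {F : (Fin d → Fin N → ℝ) → Fin d → Fin N → ℝ} {π : ℝ → ℝ}

theorem exists_pos_bound_of_continuous (hF : Continuous F) (R : ℝ) :
    ∃ K, 0 < K ∧ ∀ u, ‖u‖ ≤ R → ∀ i l, F u i l ≤ K := by
  obtain ⟨C, hC⟩ := (isCompact_closedBall (0 : Fin d → Fin N → ℝ) R).exists_bound_of_continuousOn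
    hF.continuousOn
  refine ⟨max C 1, by positivity, fun u hu i l => ?_⟩
  calc F u i l ≤ ‖F u‖ := (le_abs_self _).trans (abs_apply_apply_le_norm (F u) i l)
    _ ≤ max C 1 := (hC u (mem_closedBall_zero_iff.2 hu)).trans (le_max_left C 1)

theorem IsPenalizedSolution.sub_le_rpow {c ρ τ σ K R : ℝ} {u : Fin d → Fin N → ℝ}
    (hu : IsPenalizedSolution F π c ρ u) (hπ : IsPenaltyFunction π) (hρ : 0 < ρ) (hτ : 0 < τ)
    (hσ : 0 < σ) (hc : 0 ≤ c) (hK : ∀ i l, F u i l ≤ K) (hR : ‖u‖ ≤ R)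
    (hπτ : ∀ y, 0 ≤ y → y ≤ 2 * R → τ * y ^ (1 / σ) ≤ π y) (i j : Fin d) (l : Fin N) :
    u j l - c - u i l ≤ (K / (τ * ρ)) ^ σ := by
  rcases le_or_gt (u j l - c - u i l) 0 with hy | hy
  · have hK0 : 0 ≤ K := (hu.apply_nonneg hπ hρ.le i l).trans (hK i l)
    exact hy.trans (Real.rpow_nonneg (div_nonneg hK0 (mul_pos hτ hρ).le) σ)
  have hji : j ≠ i := by
    rintro rfl
    linarith
  have hy2R : u j l - c - u i l ≤ 2 * R := by
    linarith [le_abs_self (u j l), neg_abs_le (u i l), abs_apply_apply_le_norm u j l,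
      abs_apply_apply_le_norm u i l]
  refine le_rpow_of_mul_rpow_inv_le hρ hτ hσ hy.le ?_
  calc ρ * (τ * (u j l - c - u i l) ^ (1 / σ)) ≤ ρ * π (u j l - c - u i l) :=
        mul_le_mul_of_nonneg_left (hπτ _ hy.le hy2R) hρ.le
    _ ≤ F u i l := hu.mul_penalty_le_apply hπ hρ.le hji l
    _ ≤ K := hK i l

theorem exists_const_near_of_sub_le [Nonempty (Fin d)] {u : Fin d → Fin N → ℝ} {ε : ℝ}
    (hgap : ∀ i j l, u j l - u i l ≤ ε) :
    ∃ w : Fin N → ℝ, ‖(fun _ => w : Fin d → Fin N → ℝ)‖ ≤ ‖u‖ ∧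
      ∀ i l, u i l ≤ w l ∧ w l ≤ u i l + ε := by
  choose m hm using fun l => Finite.exists_max fun j => u j l
  refine ⟨fun l => u (m l) l, ?_, fun i l => ⟨hm l i, by linarith [hgap i (m l) l]⟩⟩
  exact norm_le_of_forall_abs_apply_apply_le (norm_nonneg u) fun _ l =>
    abs_apply_apply_le_norm u (m l) l

theorem IsMonotoneSystem.sub_le_of_lipschitzOnWith [Nonempty (Fin d)]
    (hF : IsMonotoneSystem γ F) (hγ : 0 < γ) {R : ℝ} {Kl : NNReal}
    (hLip : LipschitzOnWith Kl F (closedBall 0 R)) {ubar : Fin N → ℝ}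
    (hubar : ∀ l, ⨅ i, F (fun _ => ubar) i l = 0) {u : Fin d → Fin N → ℝ} (hu : 0 ≤ F u)
    (huR : ‖u‖ ≤ R) {ε : ℝ} (hε : 0 ≤ ε) (hgap : ∀ i j l, u j l - u i l ≤ ε)
    (i : Fin d) (l : Fin N) : ubar l - u i l ≤ (Kl / γ + 1) * ε := by
  obtain ⟨w, hwR, hw⟩ := exists_const_near_of_sub_le hgap
  set W : Fin d → Fin N → ℝ := fun _ => w
  have hdist : dist W u ≤ ε := by
    rw [dist_eq_norm]
    refine norm_le_of_forall_abs_apply_apply_le hε fun i l => ?_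
    show |w l - u i l| ≤ ε
    exact abs_le.2 ⟨by linarith [(hw i l).1], by linarith [(hw i l).2]⟩
  have hFW : ∀ i l, -(Kl * ε) ≤ F W i l := fun i l => by
    have hlip : ‖F W - F u‖ ≤ Kl * dist W u := by
      rw [← dist_eq_norm]
      exact hLip.dist_le_mul W (mem_closedBall_zero_iff.2 (hwR.trans huR)) u
        (mem_closedBall_zero_iff.2 huR)
    have habs := abs_apply_apply_le_norm (F W - F u) i l
    have hFu : 0 ≤ F u i l := hu i l
    simp only [Pi.sub_apply] at habs
    linarith [neg_abs_le (F W i l - F u i l), mul_le_mul_of_nonneg_left hdist Kl.coe_nonneg]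
  have : Nonempty (Fin N) := ⟨l⟩
  obtain ⟨l₀, hl₀⟩ := Finite.exists_max fun k => ubar k - w k
  obtain ⟨i₁, hi₁⟩ := exists_eq_ciInf_of_finite (f := fun i => F (fun _ => ubar) i l₀)
  have hcmp : ubar l₀ - w l₀ ≤ Kl * ε / γ :=
    hF.sub_le_div_of_isMax (u := fun _ => ubar) (v := W) (i := i₁) hγ (by positivity)
      (fun _ k => hl₀ k) fun _ => by linarith [hubar l₀, hFW i₁ l₀]
  calc ubar l - u i l = (ubar l - w l) + (w l - u i l) := by ring
    _ ≤ Kl * ε / γ + ε := add_le_add ((hl₀ l).trans hcmp) (by linarith [(hw i l).2])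
    _ = (Kl / γ + 1) * ε := by ring

variable {U : ℝ → Fin d → Fin N → ℝ}

theorem exists_eq_const_of_tendsto_isPenalizedSolution [Nonempty (Fin d)]
    (hπ : IsPenaltyFunction π) (hU : ∀ ρ, 0 ≤ ρ → IsPenalizedSolution F π 0 ρ (U ρ)) {K : ℝ}
    (hK : ∀ ρ, 0 ≤ ρ → ∀ i l, F (U ρ) i l ≤ K) {L : Fin d → Fin N → ℝ}
    (hL : Tendsto U atTop (𝓝 L)) : ∃ ubar : Fin N → ℝ, L = fun _ => ubar := by
  have hcomp : ∀ i l, Tendsto (fun ρ => U ρ i l) atTop (𝓝 (L i l)) := fun i l =>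
    tendsto_pi_nhds.1 (tendsto_pi_nhds.1 hL i) l
  have hle : ∀ i j l, L j l ≤ L i l := by
    intro i j l
    rcases eq_or_ne j i with rfl | hji
    · rfl
    have hpen : ∀ᶠ ρ in atTop, ρ * π (U ρ j l - 0 - U ρ i l) ≤ K :=
      (eventually_ge_atTop 0).mono fun ρ hρ =>
        ((hU ρ hρ).mul_penalty_le_apply hπ hρ hji l).trans (hK ρ hρ i l)
    linarith [hπ.nonpos_of_tendsto_of_mul_le (((hcomp j l).sub_const 0).sub (hcomp i l)) hpen]
  exact ⟨L (Classical.arbitrary _), funext fun i => funext fun l =>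
    le_antisymm (hle _ _ _) (hle _ _ _)⟩

theorem iInf_apply_eq_zero_of_tendsto [Nonempty (Fin d)] (hF : Continuous F)
    (hπ : IsPenaltyFunction π) (hU : ∀ ρ, 0 ≤ ρ → IsPenalizedSolution F π 0 ρ (U ρ))
    {L : Fin d → Fin N → ℝ} (hL : Tendsto U atTop (𝓝 L)) (l : Fin N) : ⨅ i, F L i l = 0 := by
  have hcont : Continuous fun u => ⨅ i, F u i l :=
    continuous_ciInf_of_fintype fun i => (continuous_apply_apply i l).comp hF
  refine tendsto_nhds_unique ((hcont.tendsto L).comp hL) (tendsto_const_nhds.congr' ?_)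
  exact (eventually_ge_atTop 0).mono fun ρ hρ =>
    ((hU ρ hρ).iInf_apply_eq_zero hπ hρ le_rfl l).symm

end PenalizedFamily

theorem penalty_error_zero_cost_general {N d : ℕ} (hd : 2 ≤ d)
    (γ : ℝ) (hγ : 0 < γ)
    (F : (Fin d → Fin N → ℝ) → Fin d → Fin N → ℝ)
    (hFcont : Continuous F) (hFmono : IsMonotoneSystem γ F)
    (π : ℝ → ℝ) (hπ : IsPenaltyFunction π)
    (U : ℝ → Fin d → Fin N → ℝ)
    (hU : ∀ ρ : ℝ, 0 ≤ ρ → ∀ i l,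
      F (U ρ) i l - ρ * ∑ j ∈ Finset.univ.erase i, π (U ρ j l - 0 - U ρ i l) = 0) :
    ∃ ubar : Fin N → ℝ,
      (∀ l, (⨅ i : Fin d, F (fun _ => ubar) i l) = 0) ∧
      (∀ ρ₁ ρ₂ : ℝ, 0 ≤ ρ₁ → ρ₁ ≤ ρ₂ → ∀ i l, U ρ₁ i l ≤ U ρ₂ i l) ∧
      (∀ ρ : ℝ, 0 ≤ ρ → ∀ i l, U ρ i l ≤ ubar l) ∧
      (∀ i l, Filter.Tendsto (fun ρ => U ρ i l) Filter.atTop (nhds (ubar l))) ∧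
      (LocallyLipschitz F →
        ∀ τ σ : ℝ, 0 < τ → 0 < σ →
        (∀ y : ℝ, 0 ≤ y → y ≤ 2 * supNorm (F 0) / γ → τ * y ^ (1 / σ) ≤ π y) →
        ∃ C₁ : ℝ, 0 < C₁ ∧ ∀ ρ : ℝ, 0 < ρ → ∀ i l,
          0 ≤ ubar l - U ρ i l ∧ ubar l - U ρ i l ≤ C₁ / ρ ^ σ) := by
  have : Nonempty (Fin d) := Fin.pos_iff_nonempty.1 (by omega)
  have hUsol : ∀ ρ, 0 ≤ ρ → IsPenalizedSolution F π 0 ρ (U ρ) := hU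
  have hnorm : ∀ ρ, 0 ≤ ρ → ‖U ρ‖ ≤ ‖F 0‖ / γ := fun ρ hρ =>
    (hUsol ρ hρ).norm_le hFmono hγ hπ hρ le_rfl
  have hmono : ∀ ρ₁ ρ₂, 0 ≤ ρ₁ → ρ₁ ≤ ρ₂ → U ρ₁ ≤ U ρ₂ := fun ρ₁ ρ₂ h₁ h₁₂ =>
    (hUsol ρ₁ h₁).le_of_penalty_le hFmono hγ hπ (hUsol ρ₂ (h₁.trans h₁₂)) h₁ h₁₂
  obtain ⟨K, hK0, hK⟩ := exists_pos_bound_of_continuous hFcont (‖F 0‖ / γ)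
  have hKU : ∀ ρ, 0 ≤ ρ → ∀ i l, F (U ρ) i l ≤ K := fun ρ hρ => hK _ (hnorm ρ hρ)
  obtain ⟨L, hL, hUL⟩ := exists_tendsto_atTop_of_monotoneOn_Ici (a := 0)
    (fun ρ₁ h₁ ρ₂ _ h₁₂ => hmono ρ₁ ρ₂ h₁ h₁₂) ⟨fun _ _ => ‖F 0‖ / γ, by
      rintro _ ⟨ρ, hρ, rfl⟩ i l
      exact (le_abs_self _).trans ((abs_apply_apply_le_norm _ i l).trans (hnorm ρ hρ))⟩
  obtain ⟨ubar, rfl⟩ := exists_eq_const_of_tendsto_isPenalizedSolution hπ hUsol hKU hL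
  have hmin := iInf_apply_eq_zero_of_tendsto hFcont hπ hUsol hL
  refine ⟨ubar, hmin, hmono, hUL,
    fun i l => tendsto_pi_nhds.1 (tendsto_pi_nhds.1 hL i) l, fun hLip τ σ hτ hσ hπτ => ?_⟩
  rw [supNorm_eq_norm, mul_div_assoc] at hπτ
  obtain ⟨Kl, hKl⟩ := hLip.locallyLipschitzOn.exists_lipschitzOnWith_of_compact
    (isCompact_closedBall 0 (‖F 0‖ / γ))
  refine ⟨(Kl / γ + 1) * (K / τ) ^ σ, by positivity, fun ρ hρ i l =>
    ⟨sub_nonneg.2 (hUL ρ hρ.le i l), ?_⟩⟩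
  have hgap : ∀ i j l, U ρ j l - U ρ i l ≤ (K / (τ * ρ)) ^ σ := fun i j l => by
    simpa using (hUsol ρ hρ.le).sub_le_rpow hπ hρ hτ hσ le_rfl (hKU ρ hρ.le) (hnorm ρ hρ.le)
      hπτ i j l
  calc ubar l - U ρ i l ≤ (Kl / γ + 1) * (K / (τ * ρ)) ^ σ :=
        hFmono.sub_le_of_lipschitzOnWith hγ hKl hmin ((hUsol ρ hρ.le).apply_nonneg hπ hρ.le)
          (hnorm ρ hρ.le) (by positivity) hgap i l
    _ = (Kl / γ + 1) * (K / τ) ^ σ / ρ ^ σ := by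
        rw [← div_div, Real.div_rpow (div_pos hK0 hτ).le hρ.le, mul_div_assoc]

/-- Penalty error for zero switching cost: monotone convergence to the solution of the
limiting HJB-type problem, with rate `C₁/ρ^σ` under local Lipschitz continuity of `F`
and a lower bound on the penalty function. -/
theorem penalty_error_zero_cost {N d : ℕ} (hN : 1 ≤ N) (hd : 2 ≤ d)
    (γ : ℝ) (hγ : 0 < γ)
    (F : (Fin d → Fin N → ℝ) → Fin d → Fin N → ℝ)
    (hFcont : Continuous F) (hFmono : IsMonotoneSystem γ F)
    (π : ℝ → ℝ) (hπ : IsPenaltyFunction π)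
    (U : ℝ → Fin d → Fin N → ℝ)
    (hU : ∀ ρ : ℝ, 0 ≤ ρ → ∀ i l,
      F (U ρ) i l - ρ * ∑ j ∈ Finset.univ.erase i, π (U ρ j l - 0 - U ρ i l) = 0) :
    ∃ ubar : Fin N → ℝ,
      (∀ l, (⨅ i : Fin d, F (fun _ => ubar) i l) = 0) ∧
      (∀ ρ₁ ρ₂ : ℝ, 0 ≤ ρ₁ → ρ₁ ≤ ρ₂ → ∀ i l, U ρ₁ i l ≤ U ρ₂ i l) ∧
      (∀ ρ : ℝ, 0 ≤ ρ → ∀ i l, U ρ i l ≤ ubar l) ∧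
      (∀ i l, Filter.Tendsto (fun ρ => U ρ i l) Filter.atTop (nhds (ubar l))) ∧
      (LocallyLipschitz F →
        ∀ τ σ : ℝ, 0 < τ → 0 < σ →
        (∀ y : ℝ, 0 ≤ y → y ≤ 2 * supNorm (F 0) / γ → τ * y ^ (1 / σ) ≤ π y) →
        ∃ C₁ : ℝ, 0 < C₁ ∧ ∀ ρ : ℝ, 0 < ρ → ∀ i l,
          0 ≤ ubar l - U ρ i l ∧ ubar l - U ρ i l ≤ C₁ / ρ ^ σ) :=
  penalty_error_zero_cost_general hd γ hγ F hFcont hFmono π hπ U hU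
end
end
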